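/- L^p continuity of the analysis mean map: let Q ≥ 0 a.s. and X be random, P ≥ 0 and Y constant, R > 0, c = |H|²|R^{-1}|. Then for 1 ≤ p < ∞, ‖B(X,Q) − B(Y,P)‖_p ≤ ‖X−Y‖_p + c‖Q‖_{2p}‖X−Y‖_{2p} + ‖Q−P‖_p |H||R^{-1}|(1+c|P|)|d−HY|, where B(X,Q) = X + Q H*(H Q H* + R)^{-1}(d − HX). -/

import Mathlib

/-!
Pointwise, `B(x,Q) − B(Y,P) = (x − Y) − K(Q) H (x − Y) + (K(Q) − K(P)) (d − H Y)`.
A positive invertible `R` satisfies `‖v‖² ≤ ‖R⁻¹‖ ⟪R v, v⟫` (Cauchy–Schwarz for the form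
`⟪R ·, ·⟫`), and adding the positive operator `H Q H*` only increases this form, so the
innovation covariance `S(Q) = H Q H* + R` obeys `‖S(Q)⁻¹‖ ≤ ‖R⁻¹‖`. Hence
`‖K(Q)‖ ≤ ‖Q‖ ‖H‖ ‖R⁻¹‖`, and the resolvent identity
`S(Q)⁻¹ − S(P)⁻¹ = S(Q)⁻¹ H (P − Q) H* S(P)⁻¹` gives
`‖K(Q) − K(P)‖ ≤ ‖Q − P‖ ‖H‖ ‖R⁻¹‖ (1 + c ‖P‖)`.
Taking `Lᵖ` norms of the pointwise bound, Minkowski's inequality handles the sum and Hölder's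
inequality with exponents `(2p, 2p)` the product `‖Q‖ ‖X − Y‖`.
-/

open MeasureTheory ContinuousLinearMap RealInnerProductSpace

variable {V W : Type*} [NormedAddCommGroup V] [InnerProductSpace ℝ V] [CompleteSpace V]
  [NormedAddCommGroup W] [InnerProductSpace ℝ W] [CompleteSpace W]

/-- The Kalman gain operator `K(Q) = Q H* (H Q H* + R)⁻¹`. -/
noncomputable def kalmanGain (H : V →L[ℝ] W) (R : W →L[ℝ] W) (Q : V →L[ℝ] V) : W →L[ℝ] V :=
  (Q ∘L ContinuousLinearMap.adjoint H) ∘L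
    Ring.inverse (H ∘L Q ∘L ContinuousLinearMap.adjoint H + R)

/-- The analysis mean map `B(X,Q) = X + K(Q)(d − H X)`. -/
noncomputable def analysisMean (H : V →L[ℝ] W) (R : W →L[ℝ] W) (d : W)
    (X : V) (Q : V →L[ℝ] V) : V :=
  X + kalmanGain H R Q (d - H X)

open scoped Ring

section PositiveOperator

variable {E : Type*} [NormedAddCommGroup E] [InnerProductSpace ℝ E] {A R : E →L[ℝ] E}

theorem ContinuousLinearMap.IsPositive.inner_map_sq_le (hA : A.IsPositive) (x y : E) :
    ⟪A x, y⟫ ^ 2 ≤ ⟪A x, x⟫ * ⟪A y, y⟫ := by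
  have hquad : ∀ t : ℝ, 0 ≤ ⟪A y, y⟫ * (t * t) + 2 * ⟪A x, y⟫ * t + ⟪A x, x⟫ := fun t => by
    have h := hA.inner_nonneg_left (x + t • y)
    have hyx : ⟪A y, x⟫ = ⟪A x, y⟫ := by
      rw [hA.inner_left_eq_inner_right, real_inner_comm]
    simp only [map_add, map_smul, inner_add_left, inner_add_right, real_inner_smul_left,
      real_inner_smul_right, hyx] at h
    linarith
  have := discrim_le_zero hquad
  rw [discrim] at this
  linarith

theorem ContinuousLinearMap.IsPositive.norm_sq_le_norm_inverse_mul_inner (hR : R.IsPositive)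
    (hRu : IsUnit R) (v : E) : ‖v‖ ^ 2 ≤ ‖R⁻¹ʳ‖ * ⟪R v, v⟫ := by
  set w := R⁻¹ʳ v
  have hw : R w = v := DFunLike.congr_fun (Ring.mul_inverse_cancel R hRu) v
  have hRvw : ⟪R v, w⟫ = ‖v‖ ^ 2 := by
    rw [hR.inner_left_eq_inner_right, hw, real_inner_self_eq_norm_sq]
  have hRww : ⟪R w, w⟫ ≤ ‖R⁻¹ʳ‖ * ‖v‖ ^ 2 := by
    rw [hw]
    calc ⟪v, w⟫ ≤ ‖v‖ * ‖w‖ := real_inner_le_norm v w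
      _ ≤ ‖v‖ * (‖R⁻¹ʳ‖ * ‖v‖) := by gcongr; exact le_opNorm _ _
      _ = ‖R⁻¹ʳ‖ * ‖v‖ ^ 2 := by ring
  have hcs := hR.inner_map_sq_le v w
  rw [hRvw] at hcs
  rcases (norm_nonneg v).eq_or_lt with hv | hv
  · rw [← hv]
    simpa using mul_nonneg (norm_nonneg R⁻¹ʳ) (by simpa using hR.inner_nonneg_left v)
  · have hRvv : 0 ≤ ⟪R v, v⟫ := by simpa using hR.inner_nonneg_left v
    nlinarith [mul_le_mul_of_nonneg_left hRww hRvv, pow_pos hv 2]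

theorem isUnit_of_coercive [CompleteSpace E] {S : E →L[ℝ] E} {α : ℝ} (hα : 0 < α)
    (h : ∀ u, α * ‖u‖ ^ 2 ≤ ⟪S u, u⟫) : IsUnit S := by
  refine isUnit_of_forall_le_norm_inner_map S (c := ⟨α, hα.le⟩) hα fun u => ?_
  calc ‖u‖ ^ 2 * α = α * ‖u‖ ^ 2 := mul_comm _ _
    _ ≤ ⟪S u, u⟫ := h u
    _ ≤ ‖⟪S u, u⟫‖ := Real.le_norm_self _

theorem ContinuousLinearMap.IsPositive.isUnit_add [CompleteSpace E] (hA : A.IsPositive)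
    (hR : R.IsPositive) (hRu : IsUnit R) : IsUnit (A + R) := by
  refine isUnit_of_coercive (α := (‖R⁻¹ʳ‖ + 1)⁻¹) (by positivity) fun u => ?_
  have hRuu := hR.norm_sq_le_norm_inverse_mul_inner hRu u
  have hAuu : 0 ≤ ⟪A u, u⟫ := by simpa using hA.inner_nonneg_left u
  have hRuu' : 0 ≤ ⟪R u, u⟫ := by simpa using hR.inner_nonneg_left u
  rw [inv_mul_le_iff₀ (by positivity), add_apply, inner_add_left]
  nlinarith [norm_nonneg R⁻¹ʳ]

theorem ContinuousLinearMap.IsPositive.norm_inverse_add_le (hA : A.IsPositive)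
    (hR : R.IsPositive) (hRu : IsUnit R) : ‖(A + R)⁻¹ʳ‖ ≤ ‖R⁻¹ʳ‖ := by
  by_cases hS : IsUnit (A + R)
  swap
  · rw [Ring.inverse_non_unit _ hS, norm_zero]
    exact norm_nonneg _
  refine opNorm_le_bound _ (norm_nonneg _) fun u => ?_
  set w := (A + R)⁻¹ʳ u
  have hw : (A + R) w = u := DFunLike.congr_fun (Ring.mul_inverse_cancel _ hS) u
  have hAww : 0 ≤ ⟪A w, w⟫ := by simpa using hA.inner_nonneg_left w
  have hsq : ‖w‖ ^ 2 ≤ ‖R⁻¹ʳ‖ * ‖u‖ * ‖w‖ :=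
    calc ‖w‖ ^ 2 ≤ ‖R⁻¹ʳ‖ * ⟪R w, w⟫ := hR.norm_sq_le_norm_inverse_mul_inner hRu w
      _ ≤ ‖R⁻¹ʳ‖ * ⟪(A + R) w, w⟫ := by
        gcongr
        rw [add_apply, inner_add_left]
        linarith
      _ ≤ ‖R⁻¹ʳ‖ * ‖u‖ * ‖w‖ := by
        rw [hw, mul_assoc]
        gcongr
        exact real_inner_le_norm u w
  rcases (norm_nonneg w).eq_or_lt with hw0 | hw0
  · rw [← hw0]
    positivity
  · nlinarith

end PositiveOperator

section KalmanGain

noncomputable def innovationCov (H : V →L[ℝ] W) (R : W →L[ℝ] W) (Q : V →L[ℝ] V) :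
    W →L[ℝ] W :=
  H ∘L Q ∘L adjoint H + R

variable (H : V →L[ℝ] W) {R : W →L[ℝ] W} {P Q : V →L[ℝ] V}

theorem kalmanGain_eq_comp :
    kalmanGain H R Q = (Q ∘L adjoint H) ∘L (innovationCov H R Q)⁻¹ʳ :=
  rfl

theorem norm_comp_adjoint_le {Z : Type*} [NormedAddCommGroup Z] [NormedSpace ℝ Z]
    (T : V →L[ℝ] Z) : ‖T ∘L adjoint H‖ ≤ ‖T‖ * ‖H‖ :=
  (opNorm_comp_le _ _).trans_eq (by rw [LinearIsometryEquiv.norm_map])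

theorem isUnit_innovationCov (hQ : Q.IsPositive) (hR : R.IsPositive)
    (hRu : IsUnit R) : IsUnit (innovationCov H R Q) :=
  (hQ.conj_adjoint H).isUnit_add hR hRu

theorem norm_inverse_innovationCov_le (hQ : Q.IsPositive) (hR : R.IsPositive)
    (hRu : IsUnit R) : ‖(innovationCov H R Q)⁻¹ʳ‖ ≤ ‖R⁻¹ʳ‖ :=
  (hQ.conj_adjoint H).norm_inverse_add_le hR hRu

theorem innovationCov_sub_innovationCov :
    innovationCov H R P - innovationCov H R Q = H ∘L (P - Q) ∘L adjoint H := by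
  simp only [innovationCov, sub_comp, comp_sub, add_sub_add_right_eq_sub]

theorem norm_inverse_innovationCov_sub_le (hP : P.IsPositive) (hQ : Q.IsPositive)
    (hR : R.IsPositive) (hRu : IsUnit R) :
    ‖(innovationCov H R Q)⁻¹ʳ - (innovationCov H R P)⁻¹ʳ‖
      ≤ ‖R⁻¹ʳ‖ * (‖H‖ * (‖Q - P‖ * ‖H‖)) * ‖R⁻¹ʳ‖ := by
  rw [Ring.inverse_sub_inverse (iff_of_true (isUnit_innovationCov H hQ hR hRu)
    (isUnit_innovationCov H hP hR hRu)), innovationCov_sub_innovationCov]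
  refine (norm_mul₃_le).trans ?_
  gcongr
  · exact norm_inverse_innovationCov_le H hQ hR hRu
  · refine (opNorm_comp_le _ _).trans ?_
    rw [norm_sub_rev Q P]
    gcongr
    exact norm_comp_adjoint_le H _
  · exact norm_inverse_innovationCov_le H hP hR hRu

theorem kalmanGain_sub_kalmanGain :
    kalmanGain H R Q - kalmanGain H R P
      = ((Q - P) ∘L adjoint H) ∘L (innovationCov H R Q)⁻¹ʳ
        + (P ∘L adjoint H) ∘L ((innovationCov H R Q)⁻¹ʳ - (innovationCov H R P)⁻¹ʳ) := by
  simp only [kalmanGain_eq_comp, sub_comp, comp_sub]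
  abel

theorem norm_kalmanGain_le (hQ : Q.IsPositive) (hR : R.IsPositive) (hRu : IsUnit R) :
    ‖kalmanGain H R Q‖ ≤ ‖Q‖ * ‖H‖ * ‖R⁻¹ʳ‖ := by
  refine (opNorm_comp_le _ _).trans ?_
  gcongr
  · exact norm_comp_adjoint_le H Q
  · exact norm_inverse_innovationCov_le H hQ hR hRu

theorem norm_kalmanGain_sub_le (hP : P.IsPositive) (hQ : Q.IsPositive) (hR : R.IsPositive)
    (hRu : IsUnit R) :
    ‖kalmanGain H R Q - kalmanGain H R P‖
      ≤ ‖Q - P‖ * ‖H‖ * ‖R⁻¹ʳ‖ * (1 + ‖H‖ ^ 2 * ‖R⁻¹ʳ‖ * ‖P‖) := by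
  rw [kalmanGain_sub_kalmanGain]
  calc _ ≤ ‖(Q - P) ∘L adjoint H‖ * ‖(innovationCov H R Q)⁻¹ʳ‖
        + ‖P ∘L adjoint H‖
          * ‖(innovationCov H R Q)⁻¹ʳ - (innovationCov H R P)⁻¹ʳ‖ :=
        norm_add_le_of_le (opNorm_comp_le _ _) (opNorm_comp_le _ _)
    _ ≤ ‖Q - P‖ * ‖H‖ * ‖R⁻¹ʳ‖
        + ‖P‖ * ‖H‖ * (‖R⁻¹ʳ‖ * (‖H‖ * (‖Q - P‖ * ‖H‖)) * ‖R⁻¹ʳ‖) := by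
        gcongr
        · exact norm_comp_adjoint_le H _
        · exact norm_inverse_innovationCov_le H hQ hR hRu
        · exact norm_comp_adjoint_le H _
        · exact norm_inverse_innovationCov_sub_le H hP hQ hR hRu
    _ = _ := by ring

theorem analysisMean_sub_analysisMean (d : W) (x y : V) :
    analysisMean H R d x Q - analysisMean H R d y P
      = (x - y) - kalmanGain H R Q (H (x - y))
        + (kalmanGain H R Q - kalmanGain H R P) (d - H y) := by
  simp only [analysisMean, map_sub, sub_apply]
  abel

theorem norm_analysisMean_sub_le (hP : P.IsPositive) (hQ : Q.IsPositive) (hR : R.IsPositive)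
    (hRu : IsUnit R) (d : W) (x y : V) :
    ‖analysisMean H R d x Q - analysisMean H R d y P‖
      ≤ ‖x - y‖ + ‖H‖ ^ 2 * ‖R⁻¹ʳ‖ * (‖Q‖ * ‖x - y‖)
        + ‖H‖ * ‖R⁻¹ʳ‖ * (1 + ‖H‖ ^ 2 * ‖R⁻¹ʳ‖ * ‖P‖) * ‖d - H y‖ * ‖Q - P‖ := by
  have hgain : ‖kalmanGain H R Q (H (x - y))‖ ≤ ‖H‖ ^ 2 * ‖R⁻¹ʳ‖ * (‖Q‖ * ‖x - y‖) :=
    calc _ ≤ ‖kalmanGain H R Q‖ * (‖H‖ * ‖x - y‖) := le_opNorm_of_le _ (le_opNorm _ _)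
      _ ≤ ‖Q‖ * ‖H‖ * ‖R⁻¹ʳ‖ * (‖H‖ * ‖x - y‖) := by
        gcongr
        exact norm_kalmanGain_le H hQ hR hRu
      _ = _ := by ring
  have hgainDiff : ‖(kalmanGain H R Q - kalmanGain H R P) (d - H y)‖
      ≤ ‖H‖ * ‖R⁻¹ʳ‖ * (1 + ‖H‖ ^ 2 * ‖R⁻¹ʳ‖ * ‖P‖) * ‖d - H y‖ * ‖Q - P‖ :=
    calc _ ≤ ‖kalmanGain H R Q - kalmanGain H R P‖ * ‖d - H y‖ := le_opNorm _ _
      _ ≤ ‖Q - P‖ * ‖H‖ * ‖R⁻¹ʳ‖ * (1 + ‖H‖ ^ 2 * ‖R⁻¹ʳ‖ * ‖P‖) * ‖d - H y‖ := by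
        gcongr
        exact norm_kalmanGain_sub_le H hP hQ hR hRu
      _ = _ := by ring
  rw [analysisMean_sub_analysisMean]
  exact norm_add_le_of_le ((norm_sub_le _ _).trans (by gcongr)) hgainDiff

end KalmanGain

section LpBounds

variable {α E : Type*} {m : MeasurableSpace α} {μ : Measure α} [NormedAddCommGroup E]

theorem lpNorm_ofReal_eq_rpow_integral {f : α → E} (hf : AEStronglyMeasurable f μ) {p : ℝ}
    (hp : 0 < p) : lpNorm f (ENNReal.ofReal p) μ = (∫ x, ‖f x‖ ^ p ∂μ) ^ (1 / p) := by
  rw [lpNorm_eq_integral_norm_rpow_toReal (by simpa using hp) ENNReal.ofReal_ne_top hf,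
    ENNReal.toReal_ofReal hp.le, one_div]

theorem rpow_integral_norm_rpow_le_lpNorm {F : α → E} {g : α → ℝ} {p : ℝ} (hp : 0 < p)
    (hg : MemLp g (ENNReal.ofReal p) μ) (hFg : ∀ᵐ x ∂μ, ‖F x‖ ≤ g x) :
    (∫ x, ‖F x‖ ^ p ∂μ) ^ (1 / p) ≤ lpNorm g (ENNReal.ofReal p) μ := by
  rw [lpNorm_ofReal_eq_rpow_integral hg.1 hp]
  have hint : Integrable (fun x => ‖g x‖ ^ p) μ := by
    simpa [ENNReal.toReal_ofReal hp.le] using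
      hg.integrable_norm_rpow (by simpa using hp) ENNReal.ofReal_ne_top
  refine Real.rpow_le_rpow (integral_nonneg fun x => by positivity) ?_ (by positivity)
  refine integral_mono_of_nonneg (.of_forall fun x => by positivity) hint ?_
  filter_upwards [hFg] with x hx
  exact Real.rpow_le_rpow (norm_nonneg _) (hx.trans (Real.le_norm_self _)) hp.le

theorem lpNorm_smul_le_mul_lpNorm {𝕜 : Type*} [NormedRing 𝕜] [MulActionWithZero 𝕜 E]
    [IsBoundedSMul 𝕜 E] {p q r : ENNReal} [ENNReal.HolderTriple p q r] {φ : α → 𝕜} {f : α → E}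
    (hφ : MemLp φ p μ) (hf : MemLp f q μ) :
    lpNorm (φ • f) r μ ≤ lpNorm φ p μ * lpNorm f q μ := by
  rw [← toReal_eLpNorm (hφ.1.smul hf.1), ← toReal_eLpNorm hφ.1, ← toReal_eLpNorm hf.1,
    ← ENNReal.toReal_mul]
  exact ENNReal.toReal_mono (ENNReal.mul_ne_top hφ.eLpNorm_ne_top hf.eLpNorm_ne_top)
    (eLpNorm_smul_le_mul_eLpNorm hf.1 hφ.1)

theorem ENNReal.holderTriple_ofReal_two_mul (p : ℝ) :
    ENNReal.HolderTriple (ENNReal.ofReal (2 * p)) (ENNReal.ofReal (2 * p)) (ENNReal.ofReal p) := by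
  constructor
  rw [ENNReal.ofReal_mul zero_le_two, ENNReal.ofReal_ofNat,
    ENNReal.mul_inv (.inl two_ne_zero) (.inl ENNReal.ofNat_ne_top), ← add_mul,
    ENNReal.inv_two_add_inv_two, one_mul]

theorem rpow_integral_norm_rpow_le_of_ae_le [IsFiniteMeasure μ]
    {E₁ E₂ E₃ : Type*} [NormedAddCommGroup E₁] [NormedAddCommGroup E₂] [NormedAddCommGroup E₃]
    {F : α → E} {f : α → E₁} {φ : α → E₂} {h : α → E₃} {p a b : ℝ}
    (hp : 1 ≤ p) (ha : 0 ≤ a) (hb : 0 ≤ b)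
    (hf : MemLp f (ENNReal.ofReal (2 * p)) μ) (hφ : MemLp φ (ENNReal.ofReal (2 * p)) μ)
    (hh : MemLp h (ENNReal.ofReal p) μ)
    (hF : ∀ᵐ x ∂μ, ‖F x‖ ≤ ‖f x‖ + a * (‖φ x‖ * ‖f x‖) + b * ‖h x‖) :
    (∫ x, ‖F x‖ ^ p ∂μ) ^ (1 / p)
      ≤ (∫ x, ‖f x‖ ^ p ∂μ) ^ (1 / p)
        + a * (∫ x, ‖φ x‖ ^ (2 * p) ∂μ) ^ (1 / (2 * p))
          * (∫ x, ‖f x‖ ^ (2 * p) ∂μ) ^ (1 / (2 * p))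
        + b * (∫ x, ‖h x‖ ^ p ∂μ) ^ (1 / p) := by
  have hp0 : 0 < p := one_pos.trans_le hp
  have hp1 : 1 ≤ ENNReal.ofReal p := ENNReal.one_le_ofReal.mpr hp
  have := ENNReal.holderTriple_ofReal_two_mul p
  have hfp : MemLp f (ENNReal.ofReal p) μ :=
    hf.mono_exponent (ENNReal.ofReal_le_ofReal (by linarith))
  have hφf : MemLp ((‖φ ·‖) • (‖f ·‖)) (ENNReal.ofReal p) μ := hf.norm.smul hφ.norm
  have hsum : MemLp ((‖f ·‖) + a • (‖φ ·‖) • (‖f ·‖)) (ENNReal.ofReal p) μ :=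
    hfp.norm.add (hφf.const_smul a)
  calc _ ≤ lpNorm ((‖f ·‖) + a • (‖φ ·‖) • (‖f ·‖) + b • (‖h ·‖)) (ENNReal.ofReal p) μ :=
        rpow_integral_norm_rpow_le_lpNorm hp0 (hsum.add (hh.norm.const_smul b)) hF
    _ ≤ lpNorm f (ENNReal.ofReal p) μ
          + a * (lpNorm φ (ENNReal.ofReal (2 * p)) μ * lpNorm f (ENNReal.ofReal (2 * p)) μ)
          + b * lpNorm h (ENNReal.ofReal p) μ := by
        grw [lpNorm_add_le hsum hp1, lpNorm_add_le hfp.norm hp1, lpNorm_const_smul,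
          lpNorm_const_smul, lpNorm_smul_le_mul_lpNorm hφ.norm hf.norm]
        simp [lpNorm_norm, hf.1, hφ.1, hh.1, abs_of_nonneg ha, abs_of_nonneg hb]
    _ = _ := by
        have hp2 : 0 < 2 * p := by positivity
        rw [lpNorm_ofReal_eq_rpow_integral hfp.1 hp0, lpNorm_ofReal_eq_rpow_integral hφ.1 hp2,
          lpNorm_ofReal_eq_rpow_integral hf.1 hp2, lpNorm_ofReal_eq_rpow_integral hh.1 hp0]
        ring

end LpBounds

/-- `Lᵖ` continuity of the analysis mean map: if `Q ≥ 0` a.s. and `X` are random,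
`P ≥ 0` and `Y` constant, `R > 0`, and `c = |H|²|R⁻¹|`, then
`‖B(X,Q) − B(Y,P)‖_p ≤ ‖X−Y‖_p + c‖Q‖_{2p}‖X−Y‖_{2p}
  + ‖Q−P‖_p |H||R⁻¹|(1+c|P|)|d−HY|`. -/
theorem lp_analysisMean_continuity
    {Ωs : Type*} [MeasurableSpace Ωs] (μ : Measure Ωs) [IsProbabilityMeasure μ]
    (H : V →L[ℝ] W) (R : W →L[ℝ] W) (d : W) (Y : V) (P : V →L[ℝ] V)
    (X : Ωs → V) (Q : Ωs → V →L[ℝ] V)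
    (hP : P.IsPositive) (hQpos : ∀ᵐ ω ∂μ, (Q ω).IsPositive)
    (hRsym : IsSelfAdjoint R)
    (hRpos : ∃ α : ℝ, 0 < α ∧ ∀ u : W, α * ‖u‖ ^ 2 ≤ ⟪R u, u⟫)
    (p : ℝ) (hp : 1 ≤ p)
    (hQmom : MemLp Q (ENNReal.ofReal (2 * p)) μ)
    (hXmom : MemLp X (ENNReal.ofReal (2 * p)) μ) :
    (∫ ω, ‖analysisMean H R d (X ω) (Q ω) - analysisMean H R d Y P‖ ^ p ∂μ) ^ (1 / p)
      ≤ (∫ ω, ‖X ω - Y‖ ^ p ∂μ) ^ (1 / p)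
        + (‖H‖ ^ 2 * ‖(Ring.inverse R : W →L[ℝ] W)‖) *
          (∫ ω, ‖Q ω‖ ^ (2 * p) ∂μ) ^ (1 / (2 * p)) *
          (∫ ω, ‖X ω - Y‖ ^ (2 * p) ∂μ) ^ (1 / (2 * p))
        + (∫ ω, ‖Q ω - P‖ ^ p ∂μ) ^ (1 / p) * ‖H‖ * ‖(Ring.inverse R : W →L[ℝ] W)‖ *
          (1 + (‖H‖ ^ 2 * ‖(Ring.inverse R : W →L[ℝ] W)‖) * ‖P‖) * ‖d - H Y‖ := by
  obtain ⟨α, hα, hRcoer⟩ := hRpos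
  have hR : R.IsPositive := isPositive_def'.mpr ⟨hRsym, fun u => by
    simpa [reApplyInnerSelf] using (by positivity : 0 ≤ α * ‖u‖ ^ 2).trans (hRcoer u)⟩
  have hRu : IsUnit R := isUnit_of_coercive hα hRcoer
  have hQP : MemLp (fun ω => Q ω - P) (ENNReal.ofReal p) μ :=
    (hQmom.sub (memLp_const P)).mono_exponent (ENNReal.ofReal_le_ofReal (by linarith))
  refine (rpow_integral_norm_rpow_le_of_ae_le (f := fun ω => X ω - Y)
    (a := ‖H‖ ^ 2 * ‖R⁻¹ʳ‖) (b := ‖H‖ * ‖R⁻¹ʳ‖ * (1 + ‖H‖ ^ 2 * ‖R⁻¹ʳ‖ * ‖P‖) * ‖d - H Y‖)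
    hp (by positivity) (by positivity) (hXmom.sub (memLp_const Y)) hQmom hQP ?_).trans_eq
    (by ring)
  filter_upwards [hQpos] with ω hQω
  exact norm_analysisMean_sub_le H hP hQω hR hRu d (X ω) Y
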